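/- Threshold structure of the suboptimal policy (Theorem 2, Property 2, first part): let V̂_{n,m} : {0,…,N_{n,m}} → ℝ be non-decreasing for every (n,m) ∈ I and set V̂(Q) = Σ_{(n,m)∈I} V̂_{n,m}(Q_{n,m}). Let û* ∈ 𝒰 be such that û*_n = m ∈ M_n for some BS n ∈ {0,…,N}. Then for every Q ∈ 𝒬 with Q_{n,m} ≥ φ̂_{û*}⁻(Q_{−n,−m}), one has Δ̂_{û*,v}(Q) ≤ 0 for every v ∈ 𝒰; in particular û* attains min_{u∈𝒰} Ĵ(Q,u), i.e., the suboptimal scheduling of content m by BS n is of threshold type in Q_{n,m}. -/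

import Mathlib

/-!
An action `u` serving queue `(n,m)` empties it, so its successor states `T(Q,u,A)` do not
depend on `Q_{n,m}`, while `d(Q)` cancels in `Δ̂_{u,v}(Q)`. Under any other action `v` the
successor states are non-decreasing in `Q_{n,m}`, hence so is `Ĵ(Q,v)` for non-decreasing `V̂`.
Thus `Δ̂_{u,v}` is non-increasing in `Q_{n,m}`, and its non-positivity at the least element of
`Φ̂_u` propagates to every larger `Q_{n,m}`.
-/

open Finset

namespace HetNet

/-- The queue index set `I = {(n,m) : 0 ≤ n ≤ N, m ∈ M_n}`. -/
abbrev Idx {N M : ℕ} (cache : Fin (N + 1) → Finset (Fin M)) : Type :=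
  {p : Fin (N + 1) × Fin M // p.2 ∈ cache p.1}

/-- The feasible action space `𝒰`: each BS schedules a cached content or idles (`none`),
and the MBS (BS `0`) and the SBSs do not operate concurrently. -/
def Feasible {N M : ℕ} (cache : Fin (N + 1) → Finset (Fin M))
    (u : Fin (N + 1) → Option (Fin M)) : Prop :=
  (∀ n m, u n = some m → m ∈ cache n) ∧ (u 0 ≠ none → ∀ n, n ≠ 0 → u n = none)

instance {N M : ℕ} (cache : Fin (N + 1) → Finset (Fin M)) :
    DecidablePred (Feasible cache) := by
  intro u; unfold Feasible; infer_instance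

instance {N M : ℕ} (cache : Fin (N + 1) → Finset (Fin M)) :
    Nonempty {u : Fin (N + 1) → Option (Fin M) // Feasible cache u} :=
  ⟨⟨fun _ => none, by unfold Feasible; exact ⟨fun _ _ h => (by cases h), fun h => absurd rfl h⟩⟩⟩

/-- Queue `(n,m)` is served by action `u`. -/
def Served {N M : ℕ} (u : Fin (N + 1) → Option (Fin M)) (n : Fin (N + 1)) (m : Fin M) : Prop :=
  (n = 0 ∧ u 0 = some m) ∨ (n ≠ 0 ∧ (u 0 = some m ∨ u n = some m))

instance {N M : ℕ} (u : Fin (N + 1) → Option (Fin M)) (n : Fin (N + 1)) (m : Fin M) :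
    Decidable (Served u n m) := by unfold Served; infer_instance

/-- The queue transition map `T(Q,u,A)`. -/
def T {N M : ℕ} {cache : Fin (N + 1) → Finset (Fin M)} (bound : Idx cache → ℕ)
    (Q : Idx cache → ℕ) (u : Fin (N + 1) → Option (Fin M)) (A : Idx cache → ℕ) :
    Idx cache → ℕ := fun i =>
  if Served u i.val.1 i.val.2 then min (A i) (bound i) else min (Q i + A i) (bound i)

/-- The network power cost `p(u) = Σ_n p(n, u_n)` (with `p(n,0) = 0` for an idling BS). -/
def pcost {N M : ℕ} (p : Fin (N + 1) → Fin M → ℝ) (u : Fin (N + 1) → Option (Fin M)) : ℝ :=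
  ∑ n, (u n).elim 0 (p n)

/-- The sum request queue length `d(Q)`. -/
def dcost {N M : ℕ} {cache : Fin (N + 1) → Finset (Fin M)} (Q : Idx cache → ℕ) : ℝ :=
  ∑ i, (Q i : ℝ)

/-- The per-stage cost `g(Q,u) = d(Q) + w·p(u)`. -/
def gcost {N M : ℕ} (p : Fin (N + 1) → Fin M → ℝ) (w : ℝ)
    {cache : Fin (N + 1) → Finset (Fin M)}
    (Q : Idx cache → ℕ) (u : Fin (N + 1) → Option (Fin M)) : ℝ :=
  dcost Q + w * pcost p u

/-- The state-action cost `J_V(Q,u) = g(Q,u) + Σ_{A∈𝒜} P(A)·V(T(Q,u,A))`. -/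
def Jcost {N M : ℕ} (p : Fin (N + 1) → Fin M → ℝ) (w : ℝ)
    {cache : Fin (N + 1) → Finset (Fin M)} (bound : Idx cache → ℕ)
    {ι : Type} [Fintype ι] (P : ι → ℝ) (A : ι → Idx cache → ℕ)
    (V : (Idx cache → ℕ) → ℝ) (Q : Idx cache → ℕ)
    (u : Fin (N + 1) → Option (Fin M)) : ℝ :=
  gcost p w Q u + ∑ a, P a * V (T bound Q u (A a))

open scoped Classical in
/-- `Φ_u(Q_{−n,−m})`: the set of queue lengths `q ∈ {0,…,N_{n,m}}` at coordinate `i = (n,m)`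
such that action `u` dominates every other feasible action at the state obtained from `Q`
by replacing its `(n,m)`-coordinate with `q`.  Its `Finset.max` (valued in `WithBot ℕ`,
`⊥` = −∞) is `φ_u⁺(Q_{−n,−m})`, and its `Finset.min` (valued in `WithTop ℕ`, `⊤` = +∞)
is `φ_u⁻(Q_{−n,−m})`. -/
noncomputable def Phi {N M : ℕ} (p : Fin (N + 1) → Fin M → ℝ) (w : ℝ)
    {cache : Fin (N + 1) → Finset (Fin M)} (bound : Idx cache → ℕ)
    {ι : Type} [Fintype ι] (P : ι → ℝ) (A : ι → Idx cache → ℕ)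
    (V : (Idx cache → ℕ) → ℝ) (u : Fin (N + 1) → Option (Fin M))
    (i : Idx cache) (Q : Idx cache → ℕ) : Finset ℕ :=
  (Finset.range (bound i + 1)).filter fun q =>
    ∀ v, Feasible cache v → v ≠ u →
      Jcost p w bound P A V (Function.update Q i q) u -
        Jcost p w bound P A V (Function.update Q i q) v ≤ 0

variable {N M : ℕ} {cache : Fin (N + 1) → Finset (Fin M)}

theorem served_of_eq_some {u : Fin (N + 1) → Option (Fin M)} {n : Fin (N + 1)} {m : Fin M}
    (h : u n = some m) : Served u n m := by
  by_cases h0 : n = 0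
  · exact Or.inl ⟨h0, h0 ▸ h⟩
  · exact Or.inr ⟨h0, Or.inr h⟩

section Transition

variable (bound : Idx cache → ℕ) (A : Idx cache → ℕ)

theorem T_le_bound (Q : Idx cache → ℕ) (u : Fin (N + 1) → Option (Fin M)) :
    T bound Q u A ≤ bound := fun j => by
  unfold T; split_ifs <;> exact min_le_right _ _

theorem T_update_of_served {u : Fin (N + 1) → Option (Fin M)} {i : Idx cache}
    (hi : Served u i.val.1 i.val.2) (Q : Idx cache → ℕ) (q : ℕ) :
    T bound (Function.update Q i q) u A = T bound Q u A := by
  funext j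
  by_cases hs : Served u j.val.1 j.val.2
  · simp [T, hs]
  · have hji : j ≠ i := by rintro rfl; exact hs hi
    simp [T, hs, Function.update_of_ne hji]

theorem T_mono {Q Q' : Idx cache → ℕ} (hQ : Q ≤ Q') (u : Fin (N + 1) → Option (Fin M)) :
    T bound Q u A ≤ T bound Q' u A := fun j => by
  unfold T; split_ifs
  · exact le_rfl
  · exact min_le_min_right _ (Nat.add_le_add_right (hQ j) _)

end Transition

section Cost

variable (p : Fin (N + 1) → Fin M → ℝ) (w : ℝ) (bound : Idx cache → ℕ)
  {ι : Type} [Fintype ι] {P : ι → ℝ} (A : ι → Idx cache → ℕ) {V : (Idx cache → ℕ) → ℝ}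

theorem Jcost_sub_antitone_of_served (hP : ∀ a, 0 ≤ P a)
    (hV : ∀ Q Q' : Idx cache → ℕ, Q ≤ Q' → Q' ≤ bound → V Q ≤ V Q')
    {u : Fin (N + 1) → Option (Fin M)} {i : Idx cache} (hi : Served u i.val.1 i.val.2)
    (v : Fin (N + 1) → Option (Fin M)) (Q : Idx cache → ℕ) {q q' : ℕ} (hqq' : q ≤ q') :
    Jcost p w bound P A V (Function.update Q i q') u -
        Jcost p w bound P A V (Function.update Q i q') v ≤
      Jcost p w bound P A V (Function.update Q i q) u -
        Jcost p w bound P A V (Function.update Q i q) v := by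
  have hu : ∀ a, T bound (Function.update Q i q') u (A a) =
      T bound (Function.update Q i q) u (A a) := fun a => by
    rw [T_update_of_served bound (A a) hi, T_update_of_served bound (A a) hi]
  have hv : ∑ a, P a * V (T bound (Function.update Q i q) v (A a)) ≤
      ∑ a, P a * V (T bound (Function.update Q i q') v (A a)) :=
    sum_le_sum fun a _ => mul_le_mul_of_nonneg_left
      (hV _ _ (T_mono bound (A a) (Function.update_mono hqq') v) (T_le_bound _ _ _ _))
      (hP a)
  simp only [Jcost, gcost, hu]
  linarith

theorem Jcost_sub_nonpos_of_mem_Phi (hP : ∀ a, 0 ≤ P a)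
    (hV : ∀ Q Q' : Idx cache → ℕ, Q ≤ Q' → Q' ≤ bound → V Q ≤ V Q')
    {u : Fin (N + 1) → Option (Fin M)} {i : Idx cache} (hi : Served u i.val.1 i.val.2)
    {Q : Idx cache → ℕ} {q : ℕ} (hq : q ∈ Phi p w bound P A V u i Q) (hqQ : q ≤ Q i)
    {v : Fin (N + 1) → Option (Fin M)} (hv : Feasible cache v) :
    Jcost p w bound P A V Q u - Jcost p w bound P A V Q v ≤ 0 := by
  obtain rfl | hvu := eq_or_ne v u
  · simp
  have hq_dom := (mem_filter.mp hq).2 v hv hvu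
  have h_anti := Jcost_sub_antitone_of_served p w bound A hP hV hi v Q hqQ
  rw [Function.update_eq_self] at h_anti
  linarith

end Cost

theorem exists_mem_le_of_min_le {α : Type*} [LinearOrder α] {s : Finset α} {x : α}
    (h : s.min ≤ (x : WithTop α)) :
    ∃ q ∈ s, q ≤ x := by
  obtain ⟨q, hq, hqx⟩ := (Finset.inf_le_iff (WithTop.coe_lt_top x)).mp h
  exact ⟨q, hq, WithTop.coe_le_coe.mp hqx⟩

theorem ciInf_subtype_eq_of_forall_le {α β : Type*} [ConditionallyCompleteLattice β]
    {C : α → Prop} {f : α → β} {a : α} (ha : C a) (h : ∀ b, C b → f a ≤ f b) :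
    f a = ⨅ b : {b // C b}, f b.val :=
  haveI : Nonempty {b // C b} := ⟨⟨a, ha⟩⟩
  have hleast : IsLeast (Set.range fun b : {b // C b} => f b.val) (f a) :=
    ⟨⟨⟨a, ha⟩, rfl⟩, by rintro _ ⟨b, rfl⟩; exact h b b.2⟩
  hleast.isGLB.ciInf_eq.symm

theorem suboptimal_threshold_general {N M : ℕ} (cache : Fin (N + 1) → Finset (Fin M))
    (bound : Idx cache → ℕ)
    (p : Fin (N + 1) → Fin M → ℝ)
    (w : ℝ)
    {ι : Type} [Fintype ι] (P : ι → ℝ) (A : ι → Idx cache → ℕ)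
    (hP : ∀ a, 0 ≤ P a)
    (Vv : (i : Idx cache) → ℕ → ℝ)
    (hVv : ∀ i : Idx cache, ∀ q q' : ℕ, q ≤ q' → q' ≤ bound i → Vv i q ≤ Vv i q')
    (ustar : Fin (N + 1) → Option (Fin M)) (hustar : Feasible cache ustar)
    (n : Fin (N + 1)) (m : Fin M) (hm : m ∈ cache n) (hun : ustar n = some m)
    (Q : Idx cache → ℕ)
    (hthr : (Phi p w bound P A (fun Q' => ∑ j, Vv j (Q' j)) ustar ⟨(n, m), hm⟩ Q).min ≤
      (Q ⟨(n, m), hm⟩ : WithTop ℕ)) :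
    (∀ v, Feasible cache v →
        Jcost p w bound P A (fun Q' => ∑ j, Vv j (Q' j)) Q ustar -
          Jcost p w bound P A (fun Q' => ∑ j, Vv j (Q' j)) Q v ≤ 0) ∧
      Jcost p w bound P A (fun Q' => ∑ j, Vv j (Q' j)) Q ustar =
        ⨅ u : {u // Feasible cache u},
          Jcost p w bound P A (fun Q' => ∑ j, Vv j (Q' j)) Q u.val := by
  obtain ⟨q, hq, hqQ⟩ := exists_mem_le_of_min_le hthr
  have hΔ : ∀ v, Feasible cache v →
      Jcost p w bound P A (fun Q' => ∑ j, Vv j (Q' j)) Q ustar -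
        Jcost p w bound P A (fun Q' => ∑ j, Vv j (Q' j)) Q v ≤ 0 := fun v hv =>
    Jcost_sub_nonpos_of_mem_Phi p w bound A hP
      (fun _ _ hle hle' => sum_le_sum fun j _ => hVv j _ _ (hle j) (hle' j))
      (served_of_eq_some hun) hq hqQ hv
  exact ⟨hΔ, ciInf_subtype_eq_of_forall_le hustar fun v hv => sub_nonpos.mp (hΔ v hv)⟩

/-- Theorem 2, Property 2, first part: threshold structure of the
suboptimal policy: with the additive separable approximation `V̂(Q) = Σ V̂_{n,m}(Q_{n,m})`
built from non-decreasing per-queue value functions, if `û* ∈ 𝒰` schedules `û*_n = m ∈ M_n`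
and `Q ∈ 𝒬` satisfies `Q_{n,m} ≥ φ̂_{û*}⁻(Q_{−n,−m})`, then `Δ̂_{û*,v}(Q) ≤ 0` for every
`v ∈ 𝒰`; in particular `û*` attains `min_{u∈𝒰} Ĵ(Q,u)`. -/
theorem suboptimal_threshold {N M : ℕ} (cache : Fin (N + 1) → Finset (Fin M))
    (hcache0 : ∀ m : Fin M, m ∈ cache 0)
    (bound : Idx cache → ℕ)
    (p : Fin (N + 1) → Fin M → ℝ) (hp : ∀ n m, 0 ≤ p n m)
    (w : ℝ) (hw : 0 ≤ w)
    {ι : Type} [Fintype ι] (P : ι → ℝ) (A : ι → Idx cache → ℕ)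
    (hP : ∀ a, 0 ≤ P a) (hPsum : ∑ a, P a = 1)
    (Vv : (i : Idx cache) → ℕ → ℝ)
    (hVv : ∀ i : Idx cache, ∀ q q' : ℕ, q ≤ q' → q' ≤ bound i → Vv i q ≤ Vv i q')
    (ustar : Fin (N + 1) → Option (Fin M)) (hustar : Feasible cache ustar)
    (n : Fin (N + 1)) (m : Fin M) (hm : m ∈ cache n) (hun : ustar n = some m)
    (Q : Idx cache → ℕ) (hQ : ∀ i, Q i ≤ bound i)
    (hthr : (Phi p w bound P A (fun Q' => ∑ j, Vv j (Q' j)) ustar ⟨(n, m), hm⟩ Q).min ≤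
      (Q ⟨(n, m), hm⟩ : WithTop ℕ)) :
    (∀ v, Feasible cache v →
        Jcost p w bound P A (fun Q' => ∑ j, Vv j (Q' j)) Q ustar -
          Jcost p w bound P A (fun Q' => ∑ j, Vv j (Q' j)) Q v ≤ 0) ∧
      Jcost p w bound P A (fun Q' => ∑ j, Vv j (Q' j)) Q ustar =
        ⨅ u : {u // Feasible cache u},
          Jcost p w bound P A (fun Q' => ∑ j, Vv j (Q' j)) Q u.val :=
  suboptimal_threshold_general cache bound p w P A hP Vv hVv ustar hustar n m hm hun Q hthr

end HetNet
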